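/- arXiv:2104.07542 — 7 statements merged into one kernel-verified Lean document; each statement's English description precedes it below -/
import Mathlib

section
/- Let u be a payoff with u12 > u11 > u13, u23 > u22 > u21, u31 > u33 > u32, and define μ1 = (u12-u11)/(u11-u13), μ2 = (u23-u22)/(u22-u21), μ3 = (u31-u33)/(u33-u32) (all positive). Then the system μ1*(1-p2) = p2*(1-p3), μ2*(1-p3) = p3*(1-p1), μ3*(1-p1) = p1*(1-p2) with 0 < pi < 1 for i = 1,2,3 implies μ1*μ2*μ3 < 1. -/
theorem mul_mul_eq_mul_mul_of_cyclic {R : Type*} [CommRing R] [IsDomain R]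
    {μ1 μ2 μ3 p1 p2 p3 : R} (hp1 : p1 ≠ 1) (hp2 : p2 ≠ 1) (hp3 : p3 ≠ 1)
    (e1 : μ1 * (1 - p2) = p2 * (1 - p3))
    (e2 : μ2 * (1 - p3) = p3 * (1 - p1))
    (e3 : μ3 * (1 - p1) = p1 * (1 - p2)) :
    μ1 * μ2 * μ3 = p1 * p2 * p3 := by
  have hne : (1 - p2) * (1 - p3) * (1 - p1) ≠ 0 := by
    simp only [ne_eq, mul_eq_zero, sub_eq_zero, not_or]
    exact ⟨⟨hp2.symm, hp3.symm⟩, hp1.symm⟩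
  refine mul_right_cancel₀ hne ?_
  -- multiply the three equations: each factor `1 - pᵢ` occurs once on either side
  linear_combination (μ2 * (1 - p3) * (μ3 * (1 - p1))) * e1 +
    (p2 * (1 - p3) * (μ3 * (1 - p1))) * e2 + (p2 * (1 - p3) * (p3 * (1 - p1))) * e3

theorem stmt7_general
    (μ1 μ2 μ3 : ℝ)
    (p1 p2 p3 : ℝ)
    (hp1 : 0 < p1) (hp1' : p1 < 1) (hp2 : 0 < p2) (hp2' : p2 < 1)
    (hp3' : p3 < 1)
    (e1 : μ1 * (1 - p2) = p2 * (1 - p3))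
    (e2 : μ2 * (1 - p3) = p3 * (1 - p1))
    (e3 : μ3 * (1 - p1) = p1 * (1 - p2)) :
    μ1 * μ2 * μ3 < 1 := by
  rw [mul_mul_eq_mul_mul_of_cyclic hp1'.ne hp2'.ne hp3'.ne e1 e2 e3]
  exact mul_lt_one_of_nonneg_of_lt_one_left (mul_nonneg hp1.le hp2.le)
    (mul_lt_one_of_nonneg_of_lt_one_left hp1.le hp1' hp2'.le) hp3'.le

theorem stmt7 (u11 u12 u13 u21 u22 u23 u31 u32 u33 : ℝ)
    (h1 : u12 > u11) (h2 : u11 > u13)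
    (h3 : u23 > u22) (h4 : u22 > u21)
    (h5 : u31 > u33) (h6 : u33 > u32)
    (μ1 μ2 μ3 : ℝ)
    (hμ1 : μ1 = (u12 - u11) / (u11 - u13))
    (hμ2 : μ2 = (u23 - u22) / (u22 - u21))
    (hμ3 : μ3 = (u31 - u33) / (u33 - u32))
    (p1 p2 p3 : ℝ)
    (hp1 : 0 < p1) (hp1' : p1 < 1) (hp2 : 0 < p2) (hp2' : p2 < 1)
    (hp3 : 0 < p3) (hp3' : p3 < 1)
    (e1 : μ1 * (1 - p2) = p2 * (1 - p3))
    (e2 : μ2 * (1 - p3) = p3 * (1 - p1))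
    (e3 : μ3 * (1 - p1) = p1 * (1 - p2)) :
    μ1 * μ2 * μ3 < 1 :=
  stmt7_general μ1 μ2 μ3 p1 p2 p3 hp1 hp1' hp2 hp2' hp3' e1 e2 e3
end

section
/- Let μ1, μ2, μ3 > 0 with μ1*μ2*μ3 < 1. Then p1 = μ3*(1 + μ1 + μ1*μ2)/(1 + μ3 + μ3*μ1), p2 = μ1*(1 + μ2 + μ2*μ3)/(1 + μ1 + μ1*μ2), p3 = μ2*(1 + μ3 + μ3*μ1)/(1 + μ2 + μ2*μ3) satisfy 0 < pi < 1 for each i and solve the system μ1*(1-p2) = p2*(1-p3), μ2*(1-p3) = p3*(1-p1), μ3*(1-p1) = p1*(1-p2). -/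
/-!
Everything rests on the identity `1 - p₁ = (1 - μ₁μ₂μ₃) / (1 + μ₃ + μ₃μ₁)` and its cyclic
rotations: it shows `p₁ < 1` exactly when `μ₁μ₂μ₃ < 1`, and after substituting it both sides
of `μ₁(1 - p₂) = p₂(1 - p₃)` become `μ₁(1 - μ₁μ₂μ₃) / (1 + μ₁ + μ₁μ₂)`.
The three formulas and the three equations are rotations of one another under
`μ₁ → μ₂ → μ₃ → μ₁`.
-/

noncomputable def equilibriumProb (a b c : ℝ) : ℝ :=
  c * (1 + a + a * b) / (1 + c + c * a)

theorem one_sub_equilibriumProb {a b c : ℝ} (hden : 1 + c + c * a ≠ 0) :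
    1 - equilibriumProb a b c = (1 - a * b * c) / (1 + c + c * a) := by
  unfold equilibriumProb
  field_simp
  ring

theorem equilibriumProb_pos {a b c : ℝ} (ha : 0 < a) (hb : 0 < b) (hc : 0 < c) :
    0 < equilibriumProb a b c := by
  unfold equilibriumProb
  positivity

theorem equilibriumProb_lt_one {a b c : ℝ} (ha : 0 < a) (hc : 0 < c) (habc : a * b * c < 1) :
    equilibriumProb a b c < 1 := by
  have hden : 0 < 1 + c + c * a := by positivity
  rw [← sub_pos, one_sub_equilibriumProb hden.ne']
  exact div_pos (sub_pos.mpr habc) hden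

theorem mul_one_sub_equilibriumProb {a b c : ℝ} (hdenb : 1 + b + b * c ≠ 0)
    (hdena : 1 + a + a * b ≠ 0) :
    a * (1 - equilibriumProb b c a) = equilibriumProb b c a * (1 - equilibriumProb c a b) := by
  rw [one_sub_equilibriumProb hdena, one_sub_equilibriumProb hdenb]
  unfold equilibriumProb
  field_simp

theorem stmt8 (μ1 μ2 μ3 : ℝ) (h1 : 0 < μ1) (h2 : 0 < μ2) (h3 : 0 < μ3)
    (h : μ1 * μ2 * μ3 < 1)
    (p1 p2 p3 : ℝ)
    (hp1 : p1 = μ3 * (1 + μ1 + μ1 * μ2) / (1 + μ3 + μ3 * μ1))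
    (hp2 : p2 = μ1 * (1 + μ2 + μ2 * μ3) / (1 + μ1 + μ1 * μ2))
    (hp3 : p3 = μ2 * (1 + μ3 + μ3 * μ1) / (1 + μ2 + μ2 * μ3)) :
    (0 < p1 ∧ p1 < 1) ∧ (0 < p2 ∧ p2 < 1) ∧ (0 < p3 ∧ p3 < 1) ∧
    μ1 * (1 - p2) = p2 * (1 - p3) ∧
    μ2 * (1 - p3) = p3 * (1 - p1) ∧
    μ3 * (1 - p1) = p1 * (1 - p2) := by
  change p1 = equilibriumProb μ1 μ2 μ3 at hp1
  change p2 = equilibriumProb μ2 μ3 μ1 at hp2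
  change p3 = equilibriumProb μ3 μ1 μ2 at hp3
  subst hp1 hp2 hp3
  have h' : μ2 * μ3 * μ1 < 1 := mul_rotate μ1 μ2 μ3 ▸ h
  have h'' : μ3 * μ1 * μ2 < 1 := mul_rotate μ2 μ3 μ1 ▸ h'
  have hden1 : 1 + μ1 + μ1 * μ2 ≠ 0 := by positivity
  have hden2 : 1 + μ2 + μ2 * μ3 ≠ 0 := by positivity
  have hden3 : 1 + μ3 + μ3 * μ1 ≠ 0 := by positivity
  exact ⟨⟨equilibriumProb_pos h1 h2 h3, equilibriumProb_lt_one h1 h3 h⟩,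
    ⟨equilibriumProb_pos h2 h3 h1, equilibriumProb_lt_one h2 h1 h'⟩,
    ⟨equilibriumProb_pos h3 h1 h2, equilibriumProb_lt_one h3 h2 h''⟩,
    mul_one_sub_equilibriumProb hden2 hden1,
    mul_one_sub_equilibriumProb hden3 hden2,
    mul_one_sub_equilibriumProb hden1 hden3⟩
end

section
/- Let μ1, μ2, μ3 > 0. The system μ1*(1-p2) = p2*(1-p3), μ2*(1-p3) = p3*(1-p1), μ3*(1-p1) = p1*(1-p2) has at most one solution (p1,p2,p3) with 0 < pi < 1 for all i, and any such solution is given by the explicit formulas p1 = μ3*(1+μ1+μ1*μ2)/(1+μ3+μ3*μ1), p2 = μ1*(1+μ2+μ2*μ3)/(1+μ1+μ1*μ2), p3 = μ2*(1+μ3+μ3*μ1)/(1+μ2+μ2*μ3). -/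
/-!
Eliminating `y` and `z` from the cyclic system
`a (1 - y) = y (1 - z)`, `b (1 - z) = z (1 - x)`, `c (1 - x) = x (1 - y)` leaves a quadratic
equation in `x` whose roots are `1` and `c (1 + a + a b) / (1 + c + c a)`. The constraint `x < 1`
rules out the first root, and the system is invariant under the cyclic shift
`(a, b, c, x, y, z) ↦ (b, c, a, y, z, x)`, which gives the other two coordinates.
-/

lemma cyclic_system_quadratic {a b c x y z : ℝ}
    (e1 : a * (1 - y) = y * (1 - z)) (e2 : b * (1 - z) = z * (1 - x))
    (e3 : c * (1 - x) = x * (1 - y)) :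
    (x - 1) * ((1 + c + c * a) * x - c * (1 + a + a * b)) = 0 := by
  linear_combination (1 + b - x) * x * e1 + ((1 + c) * x - c) * e2 +
    (1 + b - x) * (1 + a - z) * e3

lemma cyclic_system_eq_of_lt_one {a b c x y z : ℝ} (hden : 1 + c + c * a ≠ 0) (hx : x < 1)
    (e1 : a * (1 - y) = y * (1 - z)) (e2 : b * (1 - z) = z * (1 - x))
    (e3 : c * (1 - x) = x * (1 - y)) :
    x = c * (1 + a + a * b) / (1 + c + c * a) := by
  rcases mul_eq_zero.mp (cyclic_system_quadratic e1 e2 e3) with h | h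
  · linarith
  · rw [eq_div_iff hden]
    linarith

theorem stmt9 (μ1 μ2 μ3 : ℝ) (h1 : 0 < μ1) (h2 : 0 < μ2) (h3 : 0 < μ3) :
    ∀ p1 p2 p3 : ℝ,
      0 < p1 → p1 < 1 → 0 < p2 → p2 < 1 → 0 < p3 → p3 < 1 →
      μ1 * (1 - p2) = p2 * (1 - p3) →
      μ2 * (1 - p3) = p3 * (1 - p1) →
      μ3 * (1 - p1) = p1 * (1 - p2) →
      p1 = μ3 * (1 + μ1 + μ1 * μ2) / (1 + μ3 + μ3 * μ1) ∧
      p2 = μ1 * (1 + μ2 + μ2 * μ3) / (1 + μ1 + μ1 * μ2) ∧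
      p3 = μ2 * (1 + μ3 + μ3 * μ1) / (1 + μ2 + μ2 * μ3) := by
  intro p1 p2 p3 _ hp1 _ hp2 _ hp3 e1 e2 e3
  exact ⟨cyclic_system_eq_of_lt_one (by positivity) hp1 e1 e2 e3,
    cyclic_system_eq_of_lt_one (by positivity) hp2 e2 e3 e1,
    cyclic_system_eq_of_lt_one (by positivity) hp3 e3 e1 e2⟩
end

section
/- Let u11, u12, u1c, u21, u22, u2c satisfy u1c > u11 > u12 and u21 > u22 > u2c (condition U2). Consider the 2×2 bimatrix game from initial position v1, with pure strategies {t,f} for each player and payoff pairs (player1, player2) given by: s=(t,·) gives (u11,u21); s=(f,t) gives (u12,u22); s=(f,f) gives (u1c,u2c). Consider also the analogous game from initial position v2, where s=(·,t) gives (u12,u22), s=(t,f) gives (u11,u21), s=(f,f) gives (u1c,u2c). Then there is no pure strategy profile that is a Nash equilibrium in both games simultaneously. -/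
/-- `true` encodes strategy `t` (terminate), `false` encodes `f` (follow the cycle). -/
theorem stmt14 (u11 u12 u1c u21 u22 u2c : ℝ)
    (hU1 : u1c > u11) (hU2 : u11 > u12) (hU3 : u21 > u22) (hU4 : u22 > u2c)
    (F1v1 F2v1 F1v2 F2v2 : Bool → Bool → ℝ)
    (h1 : ∀ s1 s2, F1v1 s1 s2 = if s1 then u11 else if s2 then u12 else u1c)
    (h2 : ∀ s1 s2, F2v1 s1 s2 = if s1 then u21 else if s2 then u22 else u2c)
    (h3 : ∀ s1 s2, F1v2 s1 s2 = if s2 then u12 else if s1 then u11 else u1c)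
    (h4 : ∀ s1 s2, F2v2 s1 s2 = if s2 then u22 else if s1 then u21 else u2c) :
    ¬ ∃ s1 s2 : Bool,
      ((∀ t1, F1v1 t1 s2 ≤ F1v1 s1 s2) ∧ (∀ t2, F2v1 s1 t2 ≤ F2v1 s1 s2)) ∧
      ((∀ t1, F1v2 t1 s2 ≤ F1v2 s1 s2) ∧ (∀ t2, F2v2 s1 t2 ≤ F2v2 s1 s2)) := by
  rintro ⟨s1, s2, ⟨hA1, hA2⟩, ⟨hB1, hB2⟩⟩
  simp only [h1, h2, h3, h4] at hA1 hA2 hB1 hB2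
  cases s1 <;> cases s2 <;> simp_all <;> linarith
end

section
/- Let each of 3 players have strategy set {t,f}, and let the outcome map o : {t,f}^3 → {a1,a2,a3,c} × {initial position} be given by the 3-cycle structure: from initial position vi the outcome is a_j where j is the first index (in cyclic order i, i+1, i+2) with strategy t, and c if all play f. Let payoffs satisfy u12 > u11 > u13 > u1c, u23 > u22 > u21 > u2c, u31 > u33 > u32 > u3c. Then no strategy profile s ∈ {t,f}^3 is a Nash equilibrium simultaneously for all three initial positions v1, v2, v3. -/
/-- Outcome of the 3-cycle game from initial position `i`:
`some j` means termination at terminal `a_j`, `none` means the cycle `c`.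
`s j = true` means player `j` terminates (`t`), `false` means follow the cycle (`f`). -/
def G3outcome (s : Fin 3 → Bool) (i : Fin 3) : Option (Fin 3) :=
  if s i then some i
  else if s (i + 1) then some (i + 1)
  else if s (i + 2) then some (i + 2)
  else none

/-!
At a profile that is an equilibrium from every initial position, look at each player `j` from
his own position `j`. If `j` and `j + 1` both play `t`, then `j` gains by switching to `f`, since
the play then stops at `a_{j+1}`, which `j` prefers to `a_j`. If both play `f`, the play ends at
`a_{j+2}` or in the cycle, and `j` gains by stopping at `a_j`. Hence neighbours on the cycle play
different strategies, which is impossible for two strategies on a cycle of odd length.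
-/

open Function

lemma Fin3.exists_eq_succ (s : Fin 3 → Bool) : ∃ j, s j = s (j + 1) := by
  revert s; decide

lemma G3outcome_update_self_true (s : Fin 3 → Bool) (i : Fin 3) :
    G3outcome (update s i true) i = some i := by
  simp [G3outcome]

lemma G3outcome_update_self_false (s : Fin 3 → Bool) (i : Fin 3) (h : s (i + 1) = true) :
    G3outcome (update s i false) i = some (i + 1) := by
  simp [G3outcome, h]

lemma G3outcome_eq_add_two_or_none (s : Fin 3 → Bool) (i : Fin 3) (h₀ : s i = false)
    (h₁ : s (i + 1) = false) : G3outcome s i = some (i + 2) ∨ G3outcome s i = none := by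
  cases h₂ : s (i + 2) <;> simp [G3outcome, h₀, h₁, h₂]

lemma ne_succ_of_no_profitable_deviation (u : Option (Fin 3) → ℝ) (s : Fin 3 → Bool) (j : Fin 3)
    (hU : u (some (j + 1)) > u (some j) ∧ u (some j) > u (some (j + 2)) ∧
      u (some (j + 2)) > u none)
    (hs : ∀ b, u (G3outcome (update s j b) j) ≤ u (G3outcome s j)) :
    s j ≠ s (j + 1) := by
  obtain ⟨h_succ, h_add_two, h_none⟩ := hU
  intro h_eq
  cases hj : s j
  · have h_stop := hs true
    rw [G3outcome_update_self_true] at h_stop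
    rcases G3outcome_eq_add_two_or_none s j hj (h_eq ▸ hj) with h | h <;>
      rw [h] at h_stop <;> linarith
  · have h_pass := hs false
    rw [G3outcome_update_self_false s j (h_eq ▸ hj), G3outcome, if_pos hj] at h_pass
    linarith

theorem stmt15 (u : Fin 3 → Option (Fin 3) → ℝ)
    (hU : ∀ j : Fin 3,
      u j (some (j + 1)) > u j (some j) ∧
      u j (some j) > u j (some (j + 2)) ∧
      u j (some (j + 2)) > u j none) :
    ¬ ∃ s : Fin 3 → Bool, ∀ i : Fin 3,
      ∀ j : Fin 3, ∀ b : Bool,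
        u j (G3outcome (Function.update s j b) i) ≤ u j (G3outcome s i) := by
  rintro ⟨s, hs⟩
  obtain ⟨j, hj⟩ := Fin3.exists_eq_succ s
  exact ne_succ_of_no_profitable_deviation (u j) s j (hU j) (hs j j) hj
end

section
/- Let μ1, μ2, μ3 > 0 and suppose (p1,p2,p3) ∈ [0,1]^3 solves μ1*(1-p2) = p2*(1-p3), μ2*(1-p3) = p3*(1-p1), μ3*(1-p1) = p1*(1-p2). If pi = 1 for some i, then p1 = p2 = p3 = 1. If pi = 0 for some i, then the system forces a contradiction unless another pj ∈ {0,1}; in particular a solution with all 0 < pi < 1 exists iff μ1*μ2*μ3 < 1. -/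
/-!
Each equation `μ * (1 - q) = q * (1 - r)` links two consecutive coordinates: `q = 1` forces
`r = 1`, and `q = 0` forces `μ = 0`. Multiplying the three equations and cancelling
`(1 - p1) (1 - p2) (1 - p3)` gives `μ1 μ2 μ3 = p1 p2 p3` at an interior solution. Conversely,
with `M = μ1 μ2 μ3 < 1`, the point `1 - p1 = (1 - M) / (1 + μ3 + μ3 μ1)` (and its cyclic shifts)
solves the system.
-/

section Link

variable {μ q r : ℝ}

theorem eq_one_of_link (h : μ * (1 - q) = q * (1 - r)) (hq : q = 1) : r = 1 := by
  subst hq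
  linarith

theorem ne_zero_of_link (hμ : μ ≠ 0) (h : μ * (1 - q) = q * (1 - r)) : q ≠ 0 := by
  rintro rfl
  exact hμ (by simpa using h)

theorem link_of_sub_eq_div {M d e : ℝ} (hd : d ≠ 0) (he : e ≠ 0) (hde : d - 1 + M = μ * e)
    (hq : 1 - q = (1 - M) / d) (hr : 1 - r = (1 - M) / e) : μ * (1 - q) = q * (1 - r) := by
  obtain rfl : q = 1 - (1 - M) / d := by linarith
  have hq' : 1 - (1 - M) / d = μ * e / d := by
    rw [← hde]
    field_simp
    ring
  rw [hq, hr, hq']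
  field_simp

theorem mem_Ioo_of_sub_eq_div {M d : ℝ} (hM₀ : 0 < M) (hM₁ : M < 1) (hd : 1 ≤ d)
    (hq : 1 - q = (1 - M) / d) : q ∈ Set.Ioo 0 1 := by
  have hpos : 0 < (1 - M) / d := div_pos (by linarith) (by linarith)
  have hlt : (1 - M) / d < 1 := (div_lt_one (by linarith)).2 (by linarith)
  constructor <;> linarith

end Link

theorem prod_eq_prod_of_cyclic_links {μ1 μ2 μ3 p1 p2 p3 : ℝ} (hp1 : p1 ≠ 1) (hp2 : p2 ≠ 1)
    (hp3 : p3 ≠ 1) (e1 : μ1 * (1 - p2) = p2 * (1 - p3)) (e2 : μ2 * (1 - p3) = p3 * (1 - p1))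
    (e3 : μ3 * (1 - p1) = p1 * (1 - p2)) : μ1 * μ2 * μ3 = p1 * p2 * p3 := by
  have hne : (1 - p1) * (1 - p2) * (1 - p3) ≠ 0 := by
    simp only [ne_eq, mul_eq_zero, not_or]
    exact ⟨⟨sub_ne_zero.2 hp1.symm, sub_ne_zero.2 hp2.symm⟩, sub_ne_zero.2 hp3.symm⟩
  apply mul_right_cancel₀ hne
  calc μ1 * μ2 * μ3 * ((1 - p1) * (1 - p2) * (1 - p3))
      = (μ1 * (1 - p2)) * (μ2 * (1 - p3)) * (μ3 * (1 - p1)) := by ring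
    _ = (p2 * (1 - p3)) * (p3 * (1 - p1)) * (p1 * (1 - p2)) := by rw [e1, e2, e3]
    _ = p1 * p2 * p3 * ((1 - p1) * (1 - p2) * (1 - p3)) := by ring

theorem exists_cyclic_links_of_prod_lt_one {μ1 μ2 μ3 : ℝ} (h1 : 0 < μ1) (h2 : 0 < μ2)
    (h3 : 0 < μ3) (hM : μ1 * μ2 * μ3 < 1) :
    ∃ p1 p2 p3 : ℝ, 0 < p1 ∧ p1 < 1 ∧ 0 < p2 ∧ p2 < 1 ∧ 0 < p3 ∧ p3 < 1 ∧
      μ1 * (1 - p2) = p2 * (1 - p3) ∧ μ2 * (1 - p3) = p3 * (1 - p1) ∧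
      μ3 * (1 - p1) = p1 * (1 - p2) := by
  set M := μ1 * μ2 * μ3
  have hM₀ : 0 < M := by positivity
  set d1 := 1 + μ3 + μ3 * μ1
  set d2 := 1 + μ1 + μ1 * μ2
  set d3 := 1 + μ2 + μ2 * μ3
  have hd1 : 1 ≤ d1 := by simp only [d1]; nlinarith [mul_pos h3 h1]
  have hd2 : 1 ≤ d2 := by simp only [d2]; nlinarith [mul_pos h1 h2]
  have hd3 : 1 ≤ d3 := by simp only [d3]; nlinarith [mul_pos h2 h3]
  have hp1 : 1 - (1 - (1 - M) / d1) = (1 - M) / d1 := by ring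
  have hp2 : 1 - (1 - (1 - M) / d2) = (1 - M) / d2 := by ring
  have hp3 : 1 - (1 - (1 - M) / d3) = (1 - M) / d3 := by ring
  obtain ⟨q1, l1⟩ := mem_Ioo_of_sub_eq_div hM₀ hM hd1 hp1
  obtain ⟨q2, l2⟩ := mem_Ioo_of_sub_eq_div hM₀ hM hd2 hp2
  obtain ⟨q3, l3⟩ := mem_Ioo_of_sub_eq_div hM₀ hM hd3 hp3
  refine ⟨_, _, _, q1, l1, q2, l2, q3, l3, ?_, ?_, ?_⟩
  · exact link_of_sub_eq_div (by positivity) (by positivity) (by ring) hp2 hp3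
  · exact link_of_sub_eq_div (by positivity) (by positivity) (by ring) hp3 hp1
  · exact link_of_sub_eq_div (by positivity) (by positivity) (by ring) hp1 hp2

theorem stmt17 (μ1 μ2 μ3 : ℝ) (h1 : 0 < μ1) (h2 : 0 < μ2) (h3 : 0 < μ3) :
    (∀ p1 p2 p3 : ℝ,
      p1 ∈ Set.Icc (0:ℝ) 1 → p2 ∈ Set.Icc (0:ℝ) 1 → p3 ∈ Set.Icc (0:ℝ) 1 →
      μ1 * (1 - p2) = p2 * (1 - p3) →
      μ2 * (1 - p3) = p3 * (1 - p1) →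
      μ3 * (1 - p1) = p1 * (1 - p2) →
      ((p1 = 1 ∨ p2 = 1 ∨ p3 = 1) → p1 = 1 ∧ p2 = 1 ∧ p3 = 1) ∧
      ((p1 = 0 ∨ p2 = 0 ∨ p3 = 0) → False)) ∧
    ((∃ p1 p2 p3 : ℝ,
        0 < p1 ∧ p1 < 1 ∧ 0 < p2 ∧ p2 < 1 ∧ 0 < p3 ∧ p3 < 1 ∧
        μ1 * (1 - p2) = p2 * (1 - p3) ∧
        μ2 * (1 - p3) = p3 * (1 - p1) ∧
        μ3 * (1 - p1) = p1 * (1 - p2)) ↔ μ1 * μ2 * μ3 < 1) := by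
  refine ⟨fun p1 p2 p3 _ _ _ e1 e2 e3 => ⟨?_, ?_⟩,
    ⟨?_, exists_cyclic_links_of_prod_lt_one h1 h2 h3⟩⟩
  · rintro (h | h | h)
    · have h' := eq_one_of_link e3 h
      exact ⟨h, h', eq_one_of_link e1 h'⟩
    · have h' := eq_one_of_link e1 h
      exact ⟨eq_one_of_link e2 h', h, h'⟩
    · have h' := eq_one_of_link e2 h
      exact ⟨h', eq_one_of_link e3 h', h⟩
  · rintro (h | h | h)
    · exact ne_zero_of_link h3.ne' e3 h
    · exact ne_zero_of_link h1.ne' e1 h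
    · exact ne_zero_of_link h2.ne' e2 h
  · rintro ⟨p1, p2, p3, q1, l1, q2, l2, q3, l3, e1, e2, e3⟩
    rw [prod_eq_prod_of_cyclic_links l1.ne l2.ne l3.ne e1 e2 e3]
    exact mul_lt_one_of_nonneg_of_lt_one_left (by positivity)
      (mul_lt_one_of_nonneg_of_lt_one_left q1.le l1 l2.le) l3.le
end

section
/- Let u(a1), u(a2), u(c) be reals with (u(a2) + u(c))/2 > u(a1) > u(c). Under the a priori realization of the game structure G1 (chance position v0 moving to a2 or v1 with probability 1/2 each; player position v1 with moves to a1 or v0), the player's pure strategy maximizing the expected payoff when starting at v1 is the move (v1, v0) (giving payoff (u(a2)+u(c))/2), while the pure strategy maximizing the expected payoff when starting at v0 is (v1, a1) (giving payoff (u(a2)+u(a1))/2 > (u(a2)+u(c))/2 restricted to the v0-start comparison). Hence no pure strategy is simultaneously optimal for both initial positions. -/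
theorem Bool.not_exists_common_maximizer {β : Type*} [Preorder β] {f g : Bool → β}
    (hf : f false < f true) (hg : g true < g false) :
    ¬ ∃ b : Bool, (∀ b', f b' ≤ f b) ∧ (∀ b', g b' ≤ g b) := by
  rintro ⟨_ | _, hf_max, hg_max⟩
  · exact lt_irrefl _ (hf.trans_le (hf_max true))
  · exact lt_irrefl _ (hg.trans_le (hg_max false))

/-- `true` encodes the move `(v1, v0)` (follow the cycle), `false` the move `(v1, a1)`. -/
theorem stmt19 (ua1 ua2 uc : ℝ)
    (h1 : (ua2 + uc) / 2 > ua1) (h2 : ua1 > uc)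
    (Ev1 Ev0 : Bool → ℝ)
    (hEv1 : ∀ b, Ev1 b = if b then (ua2 + uc) / 2 else ua1)
    (hEv0 : ∀ b, Ev0 b = if b then (ua2 + uc) / 2 else (ua2 + ua1) / 2) :
    Ev1 true > Ev1 false ∧ Ev0 false > Ev0 true ∧
    ¬ ∃ b : Bool, (∀ b', Ev1 b' ≤ Ev1 b) ∧ (∀ b', Ev0 b' ≤ Ev0 b) := by
  have hv1 : Ev1 false < Ev1 true := by
    simpa only [hEv1, Bool.false_eq_true, if_false, if_true] using h1
  have hv0 : Ev0 true < Ev0 false := by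
    simp only [hEv0, Bool.false_eq_true, if_false, if_true]
    linarith
  exact ⟨hv1, hv0, Bool.not_exists_common_maximizer hv1 hv0⟩
end
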